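/- arXiv:2004.13778 — 6 statements merged into one kernel-verified Lean document; each statement's English description precedes it below -/
import Mathlib

section
/- Let A : H ⇉ H be an α-comonotone set-valued operator on a real Hilbert space H, where α ∈ ℝ, and let γ > 0 satisfy γ + α > 0. Then the resolvent J_{γA} := (Id + γA)^{-1} is at most single-valued, and on its domain it is conically θ-averaged with θ = γ/(2(γ + α)). -/
open scoped InnerProductSpace Pointwise

/-!
Writing `Q = (z - x) - (z' - x')` for the difference of the two elements of `B = γA` attached to
`x = J z` and `x' = J z'`, comonotonicity of `B` gives `⟪z - z', Q⟫ ≥ (1 + α/γ) ‖Q‖²`. With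
`z = z'` this forces `x = x'`; in general it says that `z ↦ z - 2(1 + α/γ) (z - J z)` is
nonexpansive, and `J` is the conical combination of `Id` and this map with weight
`θ = 1 / (2(1 + α/γ)) = γ / (2(γ + α))`.
-/

section

variable {H : Type*} [NormedAddCommGroup H] [InnerProductSpace ℝ H]

def IsComonotone (α : ℝ) (A : H → Set H) : Prop :=
  ∀ x u y v, u ∈ A x → v ∈ A y → α * ‖u - v‖ ^ 2 ≤ ⟪x - y, u - v⟫_ℝ

theorem norm_sub_two_mul_smul_le {c : ℝ} {d q : H} (hc : 0 ≤ c)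
    (h : c * ‖q‖ ^ 2 ≤ ⟪d, q⟫_ℝ) : ‖d - (2 * c) • q‖ ≤ ‖d‖ := by
  have hsq : ‖d - (2 * c) • q‖ ^ 2 ≤ ‖d‖ ^ 2 := by
    rw [norm_sub_sq_real, inner_smul_right, norm_smul, Real.norm_of_nonneg (by positivity)]
    nlinarith
  exact pow_le_pow_iff_left₀ (norm_nonneg _) (norm_nonneg _) two_ne_zero |>.mp hsq

namespace IsComonotone

variable {A : H → Set H} {α β : ℝ}

theorem smul (hA : IsComonotone α A) {γ : ℝ} (hγ : 0 < γ) :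
    IsComonotone (α / γ) (fun x => γ • A x) := by
  rintro x _ y _ ⟨u, hu, rfl⟩ ⟨v, hv, rfl⟩
  have h := mul_le_mul_of_nonneg_left (hA x u y v hu hv) hγ.le
  calc α / γ * ‖γ • u - γ • v‖ ^ 2 = γ * (α * ‖u - v‖ ^ 2) := by
        rw [← smul_sub, norm_smul, Real.norm_of_nonneg hγ.le]; field_simp
    _ ≤ γ * ⟪x - y, u - v⟫_ℝ := h
    _ = ⟪x - y, γ • u - γ • v⟫_ℝ := by rw [← smul_sub, inner_smul_right]

variable {B : H → Set H}

theorem inner_resolvent_ge (hB : IsComonotone β B) {z x z' x' : H}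
    (hx : z - x ∈ B x) (hx' : z' - x' ∈ B x') :
    (1 + β) * ‖(z - x) - (z' - x')‖ ^ 2 ≤ ⟪z - z', (z - x) - (z' - x')⟫_ℝ := by
  have h := hB x _ x' _ hx hx'
  have hsplit : z - z' = (x - x') + ((z - x) - (z' - x')) := by abel
  rw [hsplit, inner_add_left, real_inner_self_eq_norm_sq]
  linarith

theorem resolvent_unique (hB : IsComonotone β B) (hβ : 0 < 1 + β) {z x x' : H}
    (hx : z - x ∈ B x) (hx' : z - x' ∈ B x') : x = x' := by
  have h := hB.inner_resolvent_ge hx hx'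
  rw [sub_self, inner_zero_left, sub_sub_sub_cancel_left] at h
  have hnorm : ‖x' - x‖ ^ 2 ≤ 0 := nonpos_of_mul_nonpos_right h hβ
  exact (sub_eq_zero.mp (norm_eq_zero.mp (pow_eq_zero_iff two_ne_zero |>.mp
    (le_antisymm hnorm (sq_nonneg _))))).symm

theorem exists_conicallyAveraged_resolvent (hB : IsComonotone β B) (hβ : 0 < 1 + β) :
    ∃ R : H → H,
      (∀ z ∈ {w : H | ∃ x, w - x ∈ B x}, ∀ z' ∈ {w : H | ∃ x, w - x ∈ B x},
        ‖R z - R z'‖ ≤ ‖z - z'‖) ∧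
      (∀ z x, z - x ∈ B x → x = (1 - (2 * (1 + β))⁻¹) • z + (2 * (1 + β))⁻¹ • R z) := by
  classical
  set R : H → H := fun z => if h : ∃ x, z - x ∈ B x then z - (2 * (1 + β)) • (z - h.choose) else z
  have hR : ∀ z x, z - x ∈ B x → R z = z - (2 * (1 + β)) • (z - x) := fun z x hx => by
    have hz : ∃ x, z - x ∈ B x := ⟨x, hx⟩
    simp only [R, dif_pos hz, hB.resolvent_unique hβ hz.choose_spec hx]
  refine ⟨R, ?_, fun z x hx => ?_⟩
  · rintro z ⟨x, hx⟩ z' ⟨x', hx'⟩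
    have hdiff : R z - R z' = (z - z') - (2 * (1 + β)) • ((z - x) - (z' - x')) := by
      rw [hR z x hx, hR z' x' hx']; module
    rw [hdiff]
    exact norm_sub_two_mul_smul_le hβ.le (hB.inner_resolvent_ge hx hx')
  · rw [hR z x hx, smul_sub, smul_smul, inv_mul_cancel₀ (by positivity), one_smul]
    module

end IsComonotone

end

theorem resolvent_of_comonotone_conicallyAveraged_general {H : Type*} [NormedAddCommGroup H]
    [InnerProductSpace ℝ H] (A : H → Set H) (α γ : ℝ)
    (hγ : 0 < γ) (hγα : 0 < γ + α)
    (hA : ∀ x u y v, u ∈ A x → v ∈ A y → ⟪x - y, u - v⟫_ℝ ≥ α * ‖u - v‖ ^ 2) :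
    (∀ z x x', z - x ∈ γ • A x → z - x' ∈ γ • A x' → x = x') ∧
    (∃ R : H → H,
      (∀ z ∈ {w : H | ∃ x, w - x ∈ γ • A x}, ∀ z' ∈ {w : H | ∃ x, w - x ∈ γ • A x},
        ‖R z - R z'‖ ≤ ‖z - z'‖) ∧
      (∀ z x, z - x ∈ γ • A x →
        x = (1 - γ / (2 * (γ + α))) • z + (γ / (2 * (γ + α))) • R z)) := by
  have hB : IsComonotone (α / γ) (fun x => γ • A x) := IsComonotone.smul hA hγ
  have hβ : 0 < 1 + α / γ := by rw [one_add_div hγ.ne']; positivity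
  have hθ : γ / (2 * (γ + α)) = (2 * (1 + α / γ))⁻¹ := by field_simp
  rw [hθ]
  exact ⟨fun _ _ _ => hB.resolvent_unique hβ, hB.exists_conicallyAveraged_resolvent hβ⟩

/-- The resolvent `J_{γA} = (Id + γA)⁻¹` of an `α`-comonotone operator `A` with
`γ + α > 0` is at most single-valued and, on its domain, conically
`γ/(2(γ+α))`-averaged. -/
theorem resolvent_of_comonotone_conicallyAveraged {H : Type*} [NormedAddCommGroup H]
    [InnerProductSpace ℝ H] [CompleteSpace H] (A : H → Set H) (α γ : ℝ)
    (hγ : 0 < γ) (hγα : 0 < γ + α)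
    (hA : ∀ x u y v, u ∈ A x → v ∈ A y → ⟪x - y, u - v⟫_ℝ ≥ α * ‖u - v‖ ^ 2) :
    (∀ z x x', z - x ∈ γ • A x → z - x' ∈ γ • A x' → x = x') ∧
    (∃ R : H → H,
      (∀ z ∈ {w : H | ∃ x, w - x ∈ γ • A x}, ∀ z' ∈ {w : H | ∃ x, w - x ∈ γ • A x},
        ‖R z - R z'‖ ≤ ‖z - z'‖) ∧
      (∀ z x, z - x ∈ γ • A x →
        x = (1 - γ / (2 * (γ + α))) • z + (γ / (2 * (γ + α))) • R z)) :=
  resolvent_of_comonotone_conicallyAveraged_general A α γ hγ hγα hA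
end

section
/- Let H be a real Hilbert space, let F : H → H be firmly nonexpansive, let (x_k) be a sequence in H, and let C, D ⊆ H be closed affine subspaces such that C − C = (D − D)^⊥. Suppose that x_k ⇀ x, F(x_k) ⇀ y, F(x_k) − P_C(F(x_k)) → 0 strongly, and (x_k − F(x_k)) − P_D(x_k − F(x_k)) → 0 strongly. Then y ∈ C, x ∈ y + D, and y = F(x). -/
/-!
Put `c k = P_C (F (x k))` and `d k = P_D (x k - F (x k))`. They differ from `F (x k)` and
`x k - F (x k)` by strongly null sequences, so they converge weakly to `y` and `xl - y`; closed
convex sets are weakly sequentially closed, whence `y ∈ C` and `xl - y ∈ D`. As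
`d k - (xl - y) ∈ D - D` is orthogonal to `c k - y ∈ C - C`, the cross term
`⟪(x k - F (x k)) - (xl - y), F (x k) - y⟫` tends to `0`, and this is what lets us pass to the
limit in the firm nonexpansiveness inequality
`0 ≤ ⟪(x k - F (x k)) - (xl - F xl), F (x k) - F xl⟫`: the limit is
`⟪F xl - y, y - F xl⟫ = -‖y - F xl‖²`, so `y = F xl`.
-/

open scoped InnerProductSpace Pointwise
open Filter Topology

theorem convex_of_forall_smul_add_one_sub_smul_mem {E : Type*} [AddCommMonoid E] [Module ℝ E]
    {K : Set E} (hK : ∀ x ∈ K, ∀ y ∈ K, ∀ t : ℝ, t • x + (1 - t) • y ∈ K) : Convex ℝ K :=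
  fun x hx y hy s t _ _ hst => by
    simpa only [eq_sub_of_add_eq' hst] using hK x hx y hy s

section WeakConvergence

variable {E : Type*} [NormedAddCommGroup E] [InnerProductSpace ℝ E]

def WeakTendsto (x : ℕ → E) (a : E) : Prop :=
  ∀ u : E, Tendsto (fun k => ⟪x k, u⟫_ℝ) atTop (𝓝 ⟪a, u⟫_ℝ)

variable {x y c d : ℕ → E} {a b : E}

theorem weakTendsto_const (a : E) : WeakTendsto (fun _ => a) a :=
  fun _ => tendsto_const_nhds

theorem WeakTendsto.sub (hx : WeakTendsto x a) (hy : WeakTendsto y b) :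
    WeakTendsto (fun k => x k - y k) (a - b) := fun u => by
  simpa only [inner_sub_left] using (hx u).sub (hy u)

theorem WeakTendsto.of_tendsto_sub (hx : WeakTendsto x a)
    (h : Tendsto (fun k => x k - y k) atTop (𝓝 0)) : WeakTendsto y a := fun u => by
  have h0 : Tendsto (fun k => ⟪x k - y k, u⟫_ℝ) atTop (𝓝 0) := by
    simpa using h.inner (tendsto_const_nhds (x := u))
  simpa only [inner_sub_left, sub_sub_cancel, sub_zero] using (hx u).sub h0

theorem WeakTendsto.isBoundedUnder_norm [CompleteSpace E] (hx : WeakTendsto x a) :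
    IsBoundedUnder (· ≤ ·) atTop (fun k => ‖x k‖) := by
  have hpt : ∀ u : E, ∃ M, ∀ k, ‖innerSL ℝ (x k) u‖ ≤ M := fun u => by
    obtain ⟨M, hM⟩ := (hx u).norm.bddAbove_range
    exact ⟨M, fun k => hM ⟨k, rfl⟩⟩
  obtain ⟨M, hM⟩ := banach_steinhaus hpt
  exact isBoundedUnder_of ⟨M, fun k => by simpa only [innerSL_apply_norm] using hM k⟩

theorem WeakTendsto.mem_of_isClosed_of_convex [CompleteSpace E] {K : Set E}
    (hx : WeakTendsto x a) (hK : IsClosed K) (hKconv : Convex ℝ K) (hxK : ∀ k, x k ∈ K) :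
    a ∈ K := by
  obtain ⟨p, hpK, hp⟩ := exists_norm_eq_iInf_of_complete_convex ⟨x 0, hxK 0⟩ hK.isComplete
    hKconv a
  have hobtuse : ∀ k, ⟪a - p, x k - p⟫_ℝ ≤ 0 := fun k =>
    (norm_eq_iInf_iff_real_inner_le_zero hKconv hpK).mp hp (x k) (hxK k)
  have hlim : Tendsto (fun k => ⟪a - p, x k - p⟫_ℝ) atTop (𝓝 ⟪a - p, a - p⟫_ℝ) := by
    simpa only [real_inner_comm (a - p)] using
      (hx.sub (weakTendsto_const p)) (a - p)
  have hap : a - p = 0 :=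
    real_inner_self_nonpos.mp (le_of_tendsto' hlim hobtuse)
  rwa [sub_eq_zero.mp hap]

theorem WeakTendsto.tendsto_inner_sub_sub (hx : WeakTendsto x a) (hy : WeakTendsto y b)
    (h : Tendsto (fun k => ⟪x k - a, y k - b⟫_ℝ) atTop (𝓝 0)) (p q : E) :
    Tendsto (fun k => ⟪x k - p, y k - q⟫_ℝ) atTop (𝓝 ⟪a - p, b - q⟫_ℝ) := by
  have hy' : Tendsto (fun k => ⟪a - p, y k⟫_ℝ) atTop (𝓝 ⟪a - p, b⟫_ℝ) := by
    simpa only [real_inner_comm (a - p)] using hy (a - p)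
  convert (h.add ((hx (b - q)).add hy')).add_const (⟪p, q⟫_ℝ - ⟪a, b⟫_ℝ) using 1
  · ext k
    simp only [inner_sub_left, inner_sub_right]
    ring
  · congr 1
    simp only [inner_sub_left, inner_sub_right]
    ring

theorem WeakTendsto.tendsto_inner_sub_sub_zero_of_orthogonal [CompleteSpace E]
    (hx : WeakTendsto x a) (hy : WeakTendsto y b)
    (hxd : Tendsto (fun k => x k - d k) atTop (𝓝 0))
    (hyc : Tendsto (fun k => y k - c k) atTop (𝓝 0))
    (horth : ∀ k, ⟪d k - a, c k - b⟫_ℝ = 0) :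
    Tendsto (fun k => ⟪x k - a, y k - b⟫_ℝ) atTop (𝓝 0) := by
  have hxb := (hx.sub (weakTendsto_const a)).isBoundedUnder_norm
  have hyb := (hy.sub (weakTendsto_const b)).isBoundedUnder_norm
  have hop : ∀ v w : E, ‖⟪v, w⟫_ℝ‖ ≤ ‖v‖ * ‖w‖ := norm_inner_le_norm
  have hleft := hxd.op_zero_isBoundedUnder_le hyb _ hop
  have hright := hyc.op_zero_isBoundedUnder_le hxb (fun w v => ⟪v, w⟫_ℝ)
    fun w v => (hop v w).trans_eq (mul_comm _ _)
  have hboth := hxd.op_zero_isBoundedUnder_le hyc.norm.isBoundedUnder_le _ hop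
  -- by `horth`, `⟪x - a, y - b⟫ = ⟪x - d, y - b⟫ + ⟪x - a, y - c⟫ - ⟪x - d, y - c⟫`
  convert (hleft.add hright).sub hboth using 1
  · ext k
    have hk := horth k
    simp only [inner_sub_left, inner_sub_right] at hk ⊢
    linarith
  · simp

end WeakConvergence

section FirmlyNonexpansive

variable {E : Type*} [NormedAddCommGroup E] [InnerProductSpace ℝ E]

def FirmlyNonexpansive (F : E → E) : Prop :=
  ∀ x y, ‖F x - F y‖ ^ 2 ≤ ⟪x - y, F x - F y⟫_ℝ

theorem FirmlyNonexpansive.inner_sub_sub_nonneg {F : E → E} (hF : FirmlyNonexpansive F)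
    (x y : E) : 0 ≤ ⟪(x - F x) - (y - F y), F x - F y⟫_ℝ := by
  rw [sub_sub_sub_comm, inner_sub_left, real_inner_self_eq_norm_sq]
  linarith [hF x y]

end FirmlyNonexpansive

theorem demiclosedness_firmly_nonexpansive_affine_general {E : Type*} [NormedAddCommGroup E]
    [InnerProductSpace ℝ E] [CompleteSpace E]
    (F : E → E) (hF : ∀ x y, ⟪x - y, F x - F y⟫_ℝ ≥ ‖F x - F y‖ ^ 2)
    (C D : Set E)
    (hCcl : IsClosed C) (hDcl : IsClosed D)
    (hCaff : ∀ x ∈ C, ∀ y ∈ C, ∀ t : ℝ, t • x + (1 - t) • y ∈ C)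
    (hDaff : ∀ x ∈ D, ∀ y ∈ D, ∀ t : ℝ, t • x + (1 - t) • y ∈ D)
    (hperp : C - C = {v : E | ∀ w ∈ D - D, ⟪v, w⟫_ℝ = 0})
    (PC PD : E → E)
    (hPC : ∀ z, PC z ∈ C ∧ ∀ c ∈ C, ‖z - PC z‖ ≤ ‖z - c‖)
    (hPD : ∀ z, PD z ∈ D ∧ ∀ d ∈ D, ‖z - PD z‖ ≤ ‖z - d‖)
    (x : ℕ → E) (xl y : E)
    (h1 : ∀ u : E, Filter.Tendsto (fun k => ⟪x k, u⟫_ℝ) Filter.atTop (nhds ⟪xl, u⟫_ℝ))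
    (h2 : ∀ u : E, Filter.Tendsto (fun k => ⟪F (x k), u⟫_ℝ) Filter.atTop (nhds ⟪y, u⟫_ℝ))
    (h3 : Filter.Tendsto (fun k => F (x k) - PC (F (x k))) Filter.atTop (nhds 0))
    (h4 : Filter.Tendsto (fun k => (x k - F (x k)) - PD (x k - F (x k)))
      Filter.atTop (nhds 0)) :
    y ∈ C ∧ (∃ d ∈ D, xl = y + d) ∧ y = F xl := by
  have hF : FirmlyNonexpansive F := hF
  have hu : WeakTendsto (fun k => x k - F (x k)) (xl - y) := WeakTendsto.sub h1 h2
  have hyC : y ∈ C := (WeakTendsto.of_tendsto_sub h2 h3).mem_of_isClosed_of_convex hCcl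
    (convex_of_forall_smul_add_one_sub_smul_mem hCaff) fun _ => (hPC _).1
  have hxyD : xl - y ∈ D := (hu.of_tendsto_sub h4).mem_of_isClosed_of_convex hDcl
    (convex_of_forall_smul_add_one_sub_smul_mem hDaff) fun _ => (hPD _).1
  have horth : ∀ k, ⟪PD (x k - F (x k)) - (xl - y), PC (F (x k)) - y⟫_ℝ = 0 := fun k => by
    have hmem : PC (F (x k)) - y ∈ C - C := Set.sub_mem_sub (hPC _).1 hyC
    rw [hperp] at hmem
    rw [real_inner_comm]
    exact hmem _ (Set.sub_mem_sub (hPD _).1 hxyD)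
  have hlim := hu.tendsto_inner_sub_sub h2
    (hu.tendsto_inner_sub_sub_zero_of_orthogonal h2 h4 h3 horth) (xl - F xl) (F xl)
  have hnonneg : 0 ≤ ⟪(xl - y) - (xl - F xl), y - F xl⟫_ℝ :=
    ge_of_tendsto' hlim fun k => hF.inner_sub_sub_nonneg (x k) xl
  rw [sub_sub_sub_cancel_left, ← neg_sub, inner_neg_left, neg_nonneg] at hnonneg
  exact ⟨hyC, ⟨xl - y, hxyD, by abel⟩, sub_eq_zero.mp (real_inner_self_nonpos.mp hnonneg)⟩

/-- Demiclosedness principle for a firmly nonexpansive mapping and a pair of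
closed affine subspaces `C`, `D` with `C − C = (D − D)ᗮ`. -/
theorem demiclosedness_firmly_nonexpansive_affine {E : Type*} [NormedAddCommGroup E]
    [InnerProductSpace ℝ E] [CompleteSpace E]
    (F : E → E) (hF : ∀ x y, ⟪x - y, F x - F y⟫_ℝ ≥ ‖F x - F y‖ ^ 2)
    (C D : Set E) (hCne : C.Nonempty) (hDne : D.Nonempty)
    (hCcl : IsClosed C) (hDcl : IsClosed D)
    (hCaff : ∀ x ∈ C, ∀ y ∈ C, ∀ t : ℝ, t • x + (1 - t) • y ∈ C)
    (hDaff : ∀ x ∈ D, ∀ y ∈ D, ∀ t : ℝ, t • x + (1 - t) • y ∈ D)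
    (hperp : C - C = {v : E | ∀ w ∈ D - D, ⟪v, w⟫_ℝ = 0})
    (PC PD : E → E)
    (hPC : ∀ z, PC z ∈ C ∧ ∀ c ∈ C, ‖z - PC z‖ ≤ ‖z - c‖)
    (hPD : ∀ z, PD z ∈ D ∧ ∀ d ∈ D, ‖z - PD z‖ ≤ ‖z - d‖)
    (x : ℕ → E) (xl y : E)
    (h1 : ∀ u : E, Filter.Tendsto (fun k => ⟪x k, u⟫_ℝ) Filter.atTop (nhds ⟪xl, u⟫_ℝ))
    (h2 : ∀ u : E, Filter.Tendsto (fun k => ⟪F (x k), u⟫_ℝ) Filter.atTop (nhds ⟪y, u⟫_ℝ))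
    (h3 : Filter.Tendsto (fun k => F (x k) - PC (F (x k))) Filter.atTop (nhds 0))
    (h4 : Filter.Tendsto (fun k => (x k - F (x k)) - PD (x k - F (x k)))
      Filter.atTop (nhds 0)) :
    y ∈ C ∧ (∃ d ∈ D, xl = y + d) ∧ y = F xl :=
  demiclosedness_firmly_nonexpansive_affine_general F hF C D hCcl hDcl hCaff hDaff hperp PC PD hPC
    hPD x xl y h1 h2 h3 h4
end

section
/- Let H be a real Hilbert space, let n ≥ 2, let ρ₁,…,ρ_n > 0 and τ₁,…,τ_n > 0. For each i ∈ {1,…,n}, let F_i : H → H be τ_i-cocoercive and let (x_{i,k})_k be a sequence in H. Suppose that: (a) for each i, x_{i,k} ⇀ x_i; (b) for each i, F_i(x_{i,k}) ⇀ y; (c) Σ_{i=1}^n ρ_i(x_{i,k} − τ_iF_i(x_{i,k})) → −(Σ_{i=1}^n ρ_iτ_i)y + Σ_{i=1}^n ρ_ix_i strongly; (d) for all i, j, F_i(x_{i,k}) − F_j(x_{j,k}) → 0 strongly. Then F₁(x₁) = F₂(x₂) = ⋯ = F_n(x_n) = y. -/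
open scoped InnerProductSpace
open Filter

/-- A weakly convergent sequence in a Hilbert space is norm-bounded. -/
lemma weak_bdd {H : Type*} [NormedAddCommGroup H] [InnerProductSpace ℝ H]
    [CompleteSpace H] (a : ℕ → H) (L : H → ℝ)
    (h : ∀ u, Tendsto (fun k => ⟪a k, u⟫_ℝ) atTop (nhds (L u))) :
    ∃ C, ∀ k, ‖a k‖ ≤ C := by
  obtain ⟨C, hC⟩ := banach_steinhaus (g := fun k => innerSL ℝ (a k)) (fun u => by
    obtain ⟨C, hC⟩ := ((h u).norm).bddAbove_range
    exact ⟨C, fun k => by simpa using hC ⟨k, rfl⟩⟩)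
  exact ⟨C, fun k => by simpa [innerSL_apply_norm] using hC k⟩

/-- Demiclosedness principle for cocoercive operators. -/
theorem demiclosedness_cocoercive {H : Type*} [NormedAddCommGroup H]
    [InnerProductSpace ℝ H] [CompleteSpace H] (n : ℕ) (hn : 2 ≤ n)
    (ρ τ : Fin n → ℝ) (hρ : ∀ i, 0 < ρ i) (hτ : ∀ i, 0 < τ i)
    (F : Fin n → H → H)
    (hF : ∀ i, ∀ x y : H, ⟪x - y, F i x - F i y⟫_ℝ ≥ τ i * ‖F i x - F i y‖ ^ 2)
    (x : Fin n → ℕ → H) (xl : Fin n → H) (y : H)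
    (ha : ∀ i, ∀ u : H,
      Filter.Tendsto (fun k => ⟪x i k, u⟫_ℝ) Filter.atTop (nhds ⟪xl i, u⟫_ℝ))
    (hb : ∀ i, ∀ u : H,
      Filter.Tendsto (fun k => ⟪F i (x i k), u⟫_ℝ) Filter.atTop (nhds ⟪y, u⟫_ℝ))
    (hc : Filter.Tendsto (fun k => ∑ i, ρ i • (x i k - τ i • F i (x i k)))
      Filter.atTop (nhds ((-(∑ i, ρ i * τ i)) • y + ∑ i, ρ i • xl i)))
    (hd : ∀ i j, Filter.Tendsto (fun k => F i (x i k) - F j (x j k))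
      Filter.atTop (nhds 0)) :
    ∀ i, F i (xl i) = y := by
  -- abbreviations
  set a : Fin n → ℕ → H := fun i k => F i (x i k) with ha_def
  set z : Fin n → H := fun i => F i (xl i) with hz_def
  set w : Fin n → ℕ → H := fun i k => x i k - τ i • a i k - (xl i - τ i • y) with hw_def
  have i0 : Fin n := ⟨0, by omega⟩
  -- w converges weakly to 0
  have h_w_weak : ∀ i u, Tendsto (fun k => ⟪w i k, u⟫_ℝ) atTop (nhds 0) := by
    intro i u
    have h1 := (ha i u).sub ((hb i u).const_mul (τ i))
    have h2 := h1.sub_const ⟪xl i - τ i • y, u⟫_ℝ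
    have : (fun k => ⟪w i k, u⟫_ℝ)
        = fun k => (⟪x i k, u⟫_ℝ - τ i * ⟪a i k, u⟫_ℝ) - ⟪xl i - τ i • y, u⟫_ℝ := by
      funext k; simp [hw_def, inner_sub_left, real_inner_smul_left]
    rw [this]
    convert h2 using 2
    simp [inner_sub_left, real_inner_smul_left]
  -- boundedness
  have h_w_bdd : ∀ i, ∃ C, ∀ k, ‖w i k‖ ≤ C :=
    fun i => weak_bdd (w i) (fun _ => 0) (h_w_weak i)
  have h_a_bdd : ∃ C, ∀ k, ‖a i0 k‖ ≤ C :=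
    weak_bdd (a i0) (fun u => ⟪y, u⟫_ℝ) (hb i0)
  obtain ⟨C0, hC0⟩ := h_a_bdd
  -- strong convergence of the weighted sum of w
  have h_sumw : Tendsto (fun k => ∑ i, ρ i • w i k) atTop (nhds 0) := by
    have hconst : ∑ i, ρ i • (xl i - τ i • y)
        = (-(∑ i, ρ i * τ i)) • y + ∑ i, ρ i • xl i := by
      have hterm : ∀ i : Fin n, ρ i • (xl i - τ i • y)
          = ρ i • xl i - (ρ i * τ i) • y := by
        intro i; rw [smul_sub, smul_smul]
      rw [Finset.sum_congr rfl (fun i _ => hterm i), Finset.sum_sub_distrib,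
        ← Finset.sum_smul, neg_smul]
      abel
    have heq : (fun k => ∑ i, ρ i • w i k)
        = fun k => (∑ i, ρ i • (x i k - τ i • a i k))
            - ((-(∑ i, ρ i * τ i)) • y + ∑ i, ρ i • xl i) := by
      funext k
      rw [← hconst, ← Finset.sum_sub_distrib]
      exact Finset.sum_congr rfl fun i _ => by rw [hw_def]; simp [smul_sub]
    rw [heq]
    have := hc.sub_const ((-(∑ i, ρ i * τ i)) • y + ∑ i, ρ i • xl i)
    simpa using this
  -- key pointwise inequality from cocoercivity
  have h_ineq : ∀ k, ∑ i, ρ i * (τ i * ⟪y - z i, a i k - z i⟫_ℝ)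
      ≤ ∑ i, ρ i * ⟪w i k, a i k - z i⟫_ℝ := by
    intro k
    apply Finset.sum_le_sum
    intro i _
    have hco := hF i (x i k) (xl i)
    have e1 : x i k - xl i = w i k + τ i • (a i k - y) := by
      rw [hw_def]; simp [smul_sub]; abel
    have e2 : ⟪x i k - xl i, a i k - z i⟫_ℝ
        = ⟪w i k, a i k - z i⟫_ℝ + τ i * ⟪a i k - y, a i k - z i⟫_ℝ := by
      rw [e1, inner_add_left, real_inner_smul_left]
    have e3 : τ i * ⟪a i k - y, a i k - z i⟫_ℝ
        = τ i * ‖a i k - z i‖ ^ 2 - τ i * ⟪y - z i, a i k - z i⟫_ℝ := by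
      have : a i k - y = (a i k - z i) - (y - z i) := by abel
      rw [this, inner_sub_left, real_inner_self_eq_norm_sq]; ring
    have hco' : τ i * ‖a i k - z i‖ ^ 2 ≤ ⟪x i k - xl i, a i k - z i⟫_ℝ := hco
    have : τ i * ⟪y - z i, a i k - z i⟫_ℝ ≤ ⟪w i k, a i k - z i⟫_ℝ := by
      linarith [e2, e3, hco']
    exact mul_le_mul_of_nonneg_left this (hρ i).le
  -- limit of LHS
  have h_LHS : Tendsto (fun k => ∑ i, ρ i * (τ i * ⟪y - z i, a i k - z i⟫_ℝ))
      atTop (nhds (∑ i, ρ i * (τ i * ‖y - z i‖ ^ 2))) := by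
    apply tendsto_finset_sum
    intro i _
    have h1 := (hb i (y - z i)).sub_const ⟪z i, y - z i⟫_ℝ
    have heq : (fun k => ρ i * (τ i * ⟪y - z i, a i k - z i⟫_ℝ))
        = fun k => ρ i * (τ i * (⟪a i k, y - z i⟫_ℝ - ⟪z i, y - z i⟫_ℝ)) := by
      funext k
      rw [real_inner_comm, inner_sub_left]
    rw [heq]
    have hlim : ⟪y, y - z i⟫_ℝ - ⟪z i, y - z i⟫_ℝ = ‖y - z i‖ ^ 2 := by
      rw [← inner_sub_left, real_inner_self_eq_norm_sq]
    rw [show ρ i * (τ i * ‖y - z i‖ ^ 2)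
        = ρ i * (τ i * (⟪y, y - z i⟫_ℝ - ⟪z i, y - z i⟫_ℝ)) by rw [hlim]]
    exact (h1.const_mul (τ i)).const_mul (ρ i)
  -- limit of RHS is 0
  have h_RHS : Tendsto (fun k => ∑ i, ρ i * ⟪w i k, a i k - z i⟫_ℝ)
      atTop (nhds 0) := by
    have heq : (fun k => ∑ i, ρ i * ⟪w i k, a i k - z i⟫_ℝ)
        = fun k => (∑ i, ρ i * ⟪w i k, a i k - a i0 k⟫_ℝ)
            + ⟪∑ i, ρ i • w i k, a i0 k⟫_ℝ
            - ∑ i, ρ i * ⟪w i k, z i⟫_ℝ := by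
      funext k
      rw [sum_inner, ← Finset.sum_add_distrib, ← Finset.sum_sub_distrib]
      refine Finset.sum_congr rfl fun i _ => ?_
      rw [real_inner_smul_left]
      have : a i k - z i = (a i k - a i0 k) + a i0 k - z i := by abel
      rw [this, inner_sub_right, inner_add_right]
      ring
    rw [heq]
    have t1 : Tendsto (fun k => ∑ i, ρ i * ⟪w i k, a i k - a i0 k⟫_ℝ)
        atTop (nhds 0) := by
      rw [show (0:ℝ) = ∑ i : Fin n, 0 by simp]
      apply tendsto_finset_sum
      intro i _
      obtain ⟨C, hC⟩ := h_w_bdd i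
      have hCnn : 0 ≤ C := le_trans (norm_nonneg _) (hC 0)
      have hdn : Tendsto (fun k => ρ i * C * ‖a i k - a i0 k‖) atTop (nhds 0) := by
        have := (hd i i0).norm
        simpa using this.const_mul (ρ i * C)
      apply squeeze_zero_norm _ hdn
      intro k
      calc ‖ρ i * ⟪w i k, a i k - a i0 k⟫_ℝ‖
          = ρ i * |⟪w i k, a i k - a i0 k⟫_ℝ| := by
            rw [Real.norm_eq_abs, abs_mul, abs_of_pos (hρ i)]
        _ ≤ ρ i * (‖w i k‖ * ‖a i k - a i0 k‖) :=
            mul_le_mul_of_nonneg_left (abs_real_inner_le_norm _ _) (hρ i).le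
        _ ≤ ρ i * (C * ‖a i k - a i0 k‖) := by
            apply mul_le_mul_of_nonneg_left _ (hρ i).le
            exact mul_le_mul_of_nonneg_right (hC k) (norm_nonneg _)
        _ = ρ i * C * ‖a i k - a i0 k‖ := by ring
    have t2 : Tendsto (fun k => ⟪∑ i, ρ i • w i k, a i0 k⟫_ℝ) atTop (nhds 0) := by
      have hsn : Tendsto (fun k => ‖∑ i, ρ i • w i k‖ * C0) atTop (nhds 0) := by
        simpa using (h_sumw.norm).mul_const C0
      apply squeeze_zero_norm _ hsn
      intro k
      calc ‖⟪∑ i, ρ i • w i k, a i0 k⟫_ℝ‖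
          ≤ ‖∑ i, ρ i • w i k‖ * ‖a i0 k‖ := norm_inner_le_norm _ _
        _ ≤ ‖∑ i, ρ i • w i k‖ * C0 :=
            mul_le_mul_of_nonneg_left (hC0 k) (norm_nonneg _)
    have t3 : Tendsto (fun k => ∑ i, ρ i * ⟪w i k, z i⟫_ℝ) atTop (nhds 0) := by
      rw [show (0:ℝ) = ∑ i : Fin n, 0 by simp]
      apply tendsto_finset_sum
      intro i _
      simpa using (h_w_weak i (z i)).const_mul (ρ i)
    simpa using (t1.add t2).sub t3
  -- conclude
  have key : ∑ i, ρ i * (τ i * ‖y - z i‖ ^ 2) ≤ 0 :=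
    le_of_tendsto_of_tendsto' h_LHS h_RHS h_ineq
  have hnn : ∀ i ∈ Finset.univ, (0:ℝ) ≤ ρ i * (τ i * ‖y - z i‖ ^ 2) := by
    intro i _
    exact mul_nonneg (hρ i).le (mul_nonneg (hτ i).le (sq_nonneg _))
  have hsum0 : ∑ i, ρ i * (τ i * ‖y - z i‖ ^ 2) = 0 :=
    le_antisymm key (Finset.sum_nonneg hnn)
  intro i
  have hterm := (Finset.sum_eq_zero_iff_of_nonneg hnn).mp hsum0 i (Finset.mem_univ i)
  have hzi : ‖y - z i‖ ^ 2 = 0 := by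
    have h1 : ρ i * τ i ≠ 0 := (mul_pos (hρ i) (hτ i)).ne'
    have : ρ i * τ i * ‖y - z i‖ ^ 2 = 0 := by linarith [hterm]
    exact (mul_eq_zero.mp this).resolve_left h1
  have : y - z i = 0 := by
    rwa [pow_eq_zero_iff (two_ne_zero), norm_eq_zero] at hzi
  exact (sub_eq_zero.mp this).symm
end

section
/- Let H be a real Hilbert space and let n ≥ 2. For each i ∈ {1,…,n}, let F_i : H → H be τ_i-cocoercive (τ_i > 0) and let (x_{i,k})_k be a sequence in H. Suppose there exist ρ₁,…,ρ_n > 0 such that the balance condition (Σ_{i=1}^n ρ_iτ_i)/(Σ_{i=1}^n ρ_i) ≥ 1 holds, and suppose that: (a) for each i, x_{i,k} ⇀ x_i; (b) for each i, F_i(x_{i,k}) ⇀ y; (c) Σ_{i=1}^n ρ_i(x_{i,k} − F_i(x_{i,k})) → −(Σ_{i=1}^n ρ_i)y + Σ_{i=1}^n ρ_ix_i strongly; (d) for all i, j, F_i(x_{i,k}) − F_j(x_{j,k}) → 0 strongly. Then F₁(x₁) = F₂(x₂) = ⋯ = F_n(x_n) = y. -/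
/-!
Shift everything to the limits: `a i k = x i k - xl i ⇀ 0`, `b i k = F i (x i k) - y ⇀ 0` and
`c i = y - F i (xl i)`. Cocoercivity of `F i` at `x i k` and `xl i` reads
`τ i ‖b + c‖² ≤ ⟪a, b + c⟫`, i.e.
`τ i ‖c‖² ≤ (⟪a, c⟫ - 2 τ i ⟪b, c⟫) + (⟪a, b⟫ - τ i ‖b‖²)`.
After weighting by `ρ i` and summing, the first bracket tends to `0` by weak convergence. The `b i`
are asymptotically equal to a single `b j` and `∑ ρ i (a i - b i) → 0`, so the second bracket is
asymptotically `(∑ ρ i - ∑ ρ i τ i) ‖b j‖² ≤ 0`. Hence `∑ ρ i τ i ‖c i‖² ≤ 0`, and every `c i` vanishes.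
-/

open Filter Topology Finset
open scoped InnerProductSpace

theorem eq_zero_of_sum_mul_norm_sq_nonpos {E ι : Type*} [NormedAddCommGroup E] [Fintype ι]
    {w : ι → ℝ} {c : ι → E} (hw : ∀ i, 0 < w i)
    (h : ∑ i, w i * ‖c i‖ ^ 2 ≤ 0) (i : ι) : c i = 0 := by
  have hi : w i * ‖c i‖ ^ 2 ≤ 0 :=
    (single_le_sum (f := fun i => w i * ‖c i‖ ^ 2) (fun i _ => mul_nonneg (hw i).le (sq_nonneg _))
      (mem_univ i)).trans h
  have hsq : ‖c i‖ ^ 2 = 0 := le_antisymm (nonpos_of_mul_nonpos_right hi (hw i)) (sq_nonneg _)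
  simpa using hsq

section

variable {H : Type*} [NormedAddCommGroup H] [InnerProductSpace ℝ H]

theorem isBoundedUnder_norm_of_tendsto_inner [CompleteSpace H] {v : ℕ → H} {w : H}
    (h : ∀ u, Tendsto (fun k => ⟪v k, u⟫_ℝ) atTop (𝓝 ⟪w, u⟫_ℝ)) :
    IsBoundedUnder (· ≤ ·) atTop fun k => ‖v k‖ := by
  obtain ⟨C, hC⟩ := banach_steinhaus (g := fun k => innerSL ℝ (v k)) fun u => by
    obtain ⟨C, hC⟩ := (h u).norm.bddAbove_range
    exact ⟨C, fun k => hC ⟨k, rfl⟩⟩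
  exact isBoundedUnder_of ⟨C, fun k => by simpa only [innerSL_apply_norm] using hC k⟩

theorem Filter.Tendsto.zero_inner_isBoundedUnder_le {α : Type*} {l : Filter α} {u v : α → H}
    (hu : Tendsto u l (𝓝 0)) (hv : IsBoundedUnder (· ≤ ·) l fun k => ‖v k‖) :
    Tendsto (fun k => ⟪u k, v k⟫_ℝ) l (𝓝 0) :=
  hu.op_zero_isBoundedUnder_le hv (fun x y => ⟪x, y⟫_ℝ) norm_inner_le_norm

theorem tendsto_norm_sq_sub_norm_sq {α : Type*} {l : Filter α} {u v : α → H}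
    (hd : Tendsto (fun k => u k - v k) l (𝓝 0)) (hv : IsBoundedUnder (· ≤ ·) l fun k => ‖v k‖) :
    Tendsto (fun k => ‖u k‖ ^ 2 - ‖v k‖ ^ 2) l (𝓝 0) := by
  have key : ∀ k, ‖u k‖ ^ 2 - ‖v k‖ ^ 2 = ‖u k - v k‖ ^ 2 + 2 * ⟪u k - v k, v k⟫_ℝ := fun k => by
    rw [norm_sub_sq_real, inner_sub_left, real_inner_self_eq_norm_sq]
    ring
  simp_rw [key]
  simpa using (hd.norm.pow 2).add ((hd.zero_inner_isBoundedUnder_le hv).const_mul 2)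

variable {ι α : Type*} [Fintype ι] {l : Filter α}

theorem tendsto_sum_mul_inner_sub_sum_mul_norm_sq {a b : ι → α → H} (ρ : ι → ℝ) (j : ι)
    (ha : ∀ i, IsBoundedUnder (· ≤ ·) l fun k => ‖a i k‖)
    (hbj : IsBoundedUnder (· ≤ ·) l fun k => ‖b j k‖)
    (he : Tendsto (fun k => ∑ i, ρ i • (a i k - b i k)) l (𝓝 0))
    (hd : ∀ i, Tendsto (fun k => b i k - b j k) l (𝓝 0)) :
    Tendsto (fun k => ∑ i, ρ i * ⟪a i k, b i k⟫_ℝ - (∑ i, ρ i) * ‖b j k‖ ^ 2) l (𝓝 0) := by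
  have key : ∀ k, ∑ i, ρ i * ⟪a i k, b i k⟫_ℝ - (∑ i, ρ i) * ‖b j k‖ ^ 2 =
      ⟪∑ i, ρ i • (a i k - b i k), b j k⟫_ℝ +
        ∑ i, ρ i * (⟪b i k - b j k, a i k⟫_ℝ + ⟪b i k - b j k, b j k⟫_ℝ) := fun k => by
    simp only [sum_inner, real_inner_smul_left, sum_mul, ← sum_sub_distrib, ← sum_add_distrib]
    refine sum_congr rfl fun i _ => ?_
    simp only [inner_sub_left, inner_sub_right, real_inner_comm (a i k), real_inner_self_eq_norm_sq]
    ring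
  simp_rw [key]
  simpa using (he.zero_inner_isBoundedUnder_le hbj).add (tendsto_finsetSum univ fun i _ =>
    (((hd i).zero_inner_isBoundedUnder_le (ha i)).add
      ((hd i).zero_inner_isBoundedUnder_le hbj)).const_mul (ρ i))

theorem tendsto_sum_mul_norm_sq_sub_sum_mul_norm_sq {b : ι → α → H} (w : ι → ℝ) (j : ι)
    (hbj : IsBoundedUnder (· ≤ ·) l fun k => ‖b j k‖)
    (hd : ∀ i, Tendsto (fun k => b i k - b j k) l (𝓝 0)) :
    Tendsto (fun k => ∑ i, w i * ‖b i k‖ ^ 2 - (∑ i, w i) * ‖b j k‖ ^ 2) l (𝓝 0) := by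
  simp_rw [sum_mul, ← sum_sub_distrib, ← mul_sub]
  simpa using tendsto_finsetSum univ fun i _ =>
    (tendsto_norm_sq_sub_norm_sq (hd i) hbj).const_mul (w i)

theorem sum_mul_mul_norm_sq_nonpos_of_balanced [CompleteSpace H] {a b : ι → ℕ → H} {c : ι → H}
    {ρ τ : ι → ℝ} (j : ι) (hρ : ∀ i, 0 ≤ ρ i) (hbal : ∑ i, ρ i ≤ ∑ i, ρ i * τ i)
    (hcoco : ∀ i k, τ i * ‖b i k + c i‖ ^ 2 ≤ ⟪a i k, b i k + c i⟫_ℝ)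
    (ha : ∀ i u, Tendsto (fun k => ⟪a i k, u⟫_ℝ) atTop (𝓝 0))
    (hb : ∀ i u, Tendsto (fun k => ⟪b i k, u⟫_ℝ) atTop (𝓝 0))
    (he : Tendsto (fun k => ∑ i, ρ i • (a i k - b i k)) atTop (𝓝 0))
    (hd : ∀ i, Tendsto (fun k => b i k - b j k) atTop (𝓝 0)) :
    ∑ i, ρ i * τ i * ‖c i‖ ^ 2 ≤ 0 := by
  have hbdd {v : ℕ → H} (h : ∀ u, Tendsto (fun k => ⟪v k, u⟫_ℝ) atTop (𝓝 0)) :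
      IsBoundedUnder (· ≤ ·) atTop fun k => ‖v k‖ :=
    isBoundedUnder_norm_of_tendsto_inner (w := 0) (by simpa only [inner_zero_left] using h)
  have hweak : Tendsto (fun k => ∑ i, ρ i * (⟪a i k, c i⟫_ℝ - 2 * τ i * ⟪b i k, c i⟫_ℝ))
      atTop (𝓝 0) := by
    simpa using tendsto_finsetSum univ fun i _ =>
      ((ha i (c i)).sub ((hb i (c i)).const_mul (2 * τ i))).const_mul (ρ i)
  have hstrong := (tendsto_sum_mul_inner_sub_sum_mul_norm_sq ρ j (fun i => hbdd (ha i))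
    (hbdd (hb j)) he hd).sub
      (tendsto_sum_mul_norm_sq_sub_sum_mul_norm_sq (fun i => ρ i * τ i) j (hbdd (hb j)) hd)
  refine ge_of_tendsto' (by simpa using hweak.add hstrong) fun k => ?_
  have hterm : ∀ i, ρ i * τ i * ‖c i‖ ^ 2 ≤ ρ i * (⟪a i k, c i⟫_ℝ - 2 * τ i * ⟪b i k, c i⟫_ℝ) +
      (ρ i * ⟪a i k, b i k⟫_ℝ - ρ i * τ i * ‖b i k‖ ^ 2) := fun i => by
    have h := mul_le_mul_of_nonneg_left (hcoco i k) (hρ i)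
    rw [norm_add_sq_real, inner_add_right] at h
    linarith
  have hbalance : (∑ i, ρ i - ∑ i, ρ i * τ i) * ‖b j k‖ ^ 2 ≤ 0 :=
    mul_nonpos_of_nonpos_of_nonneg (by linarith) (sq_nonneg _)
  have hsum := sum_le_sum fun i (_ : i ∈ univ) => hterm i
  rw [sum_add_distrib, sum_sub_distrib] at hsum
  linarith

end

theorem demiclosedness_balanced_cocoercive_general {H : Type*} [NormedAddCommGroup H]
    [InnerProductSpace ℝ H] [CompleteSpace H] (n : ℕ)
    (τ : Fin n → ℝ) (hτ : ∀ i, 0 < τ i)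
    (F : Fin n → H → H)
    (hF : ∀ i, ∀ x y : H, ⟪x - y, F i x - F i y⟫_ℝ ≥ τ i * ‖F i x - F i y‖ ^ 2)
    (ρ : Fin n → ℝ) (hρ : ∀ i, 0 < ρ i)
    (hbal : (∑ i, ρ i * τ i) / (∑ i, ρ i) ≥ 1)
    (x : Fin n → ℕ → H) (xl : Fin n → H) (y : H)
    (ha : ∀ i, ∀ u : H,
      Filter.Tendsto (fun k => ⟪x i k, u⟫_ℝ) Filter.atTop (nhds ⟪xl i, u⟫_ℝ))
    (hb : ∀ i, ∀ u : H,
      Filter.Tendsto (fun k => ⟪F i (x i k), u⟫_ℝ) Filter.atTop (nhds ⟪y, u⟫_ℝ))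
    (hc : Filter.Tendsto (fun k => ∑ i, ρ i • (x i k - F i (x i k)))
      Filter.atTop (nhds ((-(∑ i, ρ i)) • y + ∑ i, ρ i • xl i)))
    (hd : ∀ i j, Filter.Tendsto (fun k => F i (x i k) - F j (x j k))
      Filter.atTop (nhds 0)) :
    ∀ i, F i (xl i) = y := by
  intro j
  have hbal_le : ∑ i, ρ i ≤ ∑ i, ρ i * τ i := by
    rwa [ge_iff_le, le_div_iff₀ (sum_pos (fun i _ => hρ i) ⟨j, mem_univ j⟩), one_mul] at hbal
  have hcoco : ∀ i k, τ i * ‖(F i (x i k) - y) + (y - F i (xl i))‖ ^ 2 ≤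
      ⟪x i k - xl i, (F i (x i k) - y) + (y - F i (xl i))⟫_ℝ := fun i k => by
    rw [sub_add_sub_cancel]
    exact hF i _ _
  have ha₀ : ∀ i u, Tendsto (fun k => ⟪x i k - xl i, u⟫_ℝ) atTop (𝓝 0) := fun i u => by
    simpa [inner_sub_left] using (ha i u).sub_const ⟪xl i, u⟫_ℝ
  have hb₀ : ∀ i u, Tendsto (fun k => ⟪F i (x i k) - y, u⟫_ℝ) atTop (𝓝 0) := fun i u => by
    simpa [inner_sub_left] using (hb i u).sub_const ⟪y, u⟫_ℝ
  have he : Tendsto (fun k => ∑ i, ρ i • ((x i k - xl i) - (F i (x i k) - y))) atTop (𝓝 0) := by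
    have h := (hc.sub_const (∑ i, ρ i • xl i)).add_const ((∑ i, ρ i) • y)
    convert h using 2 with k
    · simp only [smul_sub, sum_sub_distrib, sum_smul]
      abel
    · simp only [neg_smul]
      abel
  have hd₀ : ∀ i, Tendsto (fun k => (F i (x i k) - y) - (F j (x j k) - y)) atTop (𝓝 0) := by
    simpa only [sub_sub_sub_cancel_right] using (hd · j)
  have hle := sum_mul_mul_norm_sq_nonpos_of_balanced j (fun i => (hρ i).le) hbal_le hcoco ha₀ hb₀
    he hd₀
  exact (sub_eq_zero.mp (eq_zero_of_sum_mul_norm_sq_nonpos (fun i => mul_pos (hρ i) (hτ i)) hle j)).symm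

/-- Demiclosedness principle for balanced cocoercive operators. -/
theorem demiclosedness_balanced_cocoercive {H : Type*} [NormedAddCommGroup H]
    [InnerProductSpace ℝ H] [CompleteSpace H] (n : ℕ) (hn : 2 ≤ n)
    (τ : Fin n → ℝ) (hτ : ∀ i, 0 < τ i)
    (F : Fin n → H → H)
    (hF : ∀ i, ∀ x y : H, ⟪x - y, F i x - F i y⟫_ℝ ≥ τ i * ‖F i x - F i y‖ ^ 2)
    (ρ : Fin n → ℝ) (hρ : ∀ i, 0 < ρ i)
    (hbal : (∑ i, ρ i * τ i) / (∑ i, ρ i) ≥ 1)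
    (x : Fin n → ℕ → H) (xl : Fin n → H) (y : H)
    (ha : ∀ i, ∀ u : H,
      Filter.Tendsto (fun k => ⟪x i k, u⟫_ℝ) Filter.atTop (nhds ⟪xl i, u⟫_ℝ))
    (hb : ∀ i, ∀ u : H,
      Filter.Tendsto (fun k => ⟪F i (x i k), u⟫_ℝ) Filter.atTop (nhds ⟪y, u⟫_ℝ))
    (hc : Filter.Tendsto (fun k => ∑ i, ρ i • (x i k - F i (x i k)))
      Filter.atTop (nhds ((-(∑ i, ρ i)) • y + ∑ i, ρ i • xl i)))
    (hd : ∀ i j, Filter.Tendsto (fun k => F i (x i k) - F j (x j k))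
      Filter.atTop (nhds 0)) :
    ∀ i, F i (xl i) = y :=
  demiclosedness_balanced_cocoercive_general n τ hτ F hF ρ hρ hbal x xl y ha hb hc hd
end

section
/- Let H be a real Hilbert space, let A, B : H ⇉ H be set-valued operators, let γ, δ > 0, let λ = 1 + δ/γ and μ = 1 + γ/δ, and let κ > 0. Suppose the resolvent J₁ := (Id + γA)^{-1} is single-valued. Define J₂ := (Id + δB)^{-1}, R₁ := (1 − λ)Id + λJ₁, R₂ := (1 − μ)Id + μJ₂, and T_aDR := (1 − κ)Id + κR₂R₁ (as set-valued operators, composed and combined pointwise). Then Id − T_aDR = κμ(J₁ − J₂R₁), i.e., for every x, the set (Id − T_aDR)(x) equals the set κμ(J₁(x) − J₂(R₁(x))). -/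
open scoped Pointwise

/-- Fact: with `λ = 1 + δ/γ`, `μ = 1 + γ/δ` and `J₁` single-valued,
`Id − T_aDR = κμ(J₁ − J₂R₁)` as set-valued operators. -/
theorem aDR_identity {H : Type*} [NormedAddCommGroup H] [InnerProductSpace ℝ H]
    [CompleteSpace H] (A B : H → Set H) (γ δ lam mu κ : ℝ)
    (hγ : 0 < γ) (hδ : 0 < δ) (hlam : lam = 1 + δ / γ) (hmu : mu = 1 + γ / δ)
    (hκ : 0 < κ)
    (J₁ : H → Set H) (hJ₁ : ∀ z, J₁ z = {x : H | z - x ∈ γ • A x})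
    (J₂ : H → Set H) (hJ₂ : ∀ z, J₂ z = {x : H | z - x ∈ δ • B x})
    (hsv : ∀ z, ∀ x ∈ J₁ z, ∀ x' ∈ J₁ z, x = x')
    (R₁ : H → Set H) (hR₁ : ∀ z, R₁ z = (fun x => (1 - lam) • z + lam • x) '' J₁ z)
    (R₂ : H → Set H) (hR₂ : ∀ z, R₂ z = (fun x => (1 - mu) • z + mu • x) '' J₂ z)
    (T : H → Set H)
    (hT : ∀ z, T z = (fun w => (1 - κ) • z + κ • w) '' (⋃ y ∈ R₁ z, R₂ y)) :
    ∀ z : H, (fun t => z - t) '' T z =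
      {w : H | ∃ a ∈ J₁ z, ∃ b ∈ ⋃ y ∈ R₁ z, J₂ y, w = (κ * mu) • (a - b)} := by
  intro z
  have hγ' := hγ.ne'
  have hδ' := hδ.ne'
  have key : ∀ a b : H,
      z - ((1 - κ) • z + κ • ((1 - mu) • ((1 - lam) • z + lam • a) + mu • b)) =
        (κ * mu) • (a - b) := by
    intro a b
    subst hlam hmu
    match_scalars <;> field_simp <;> ring
  ext w
  simp only [hT, Set.mem_image, Set.mem_setOf_eq]
  constructor
  · rintro ⟨_, ⟨u, hu, rfl⟩, rfl⟩
    obtain ⟨y, hy, hu⟩ := Set.mem_iUnion₂.mp hu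
    rw [hR₂] at hu
    obtain ⟨b, hb, rfl⟩ := hu
    rw [hR₁] at hy
    obtain ⟨a, ha, rfl⟩ := hy
    refine ⟨a, ha, b, ?_, key a b⟩
    exact Set.mem_iUnion₂.mpr ⟨_, by rw [hR₁]; exact ⟨a, ha, rfl⟩, hb⟩
  · rintro ⟨a, ha, b, hb, rfl⟩
    obtain ⟨y, hy, hb2⟩ := Set.mem_iUnion₂.mp hb
    rw [hR₁ z] at hy
    obtain ⟨a', ha', rfl⟩ := hy
    obtain rfl : a = a' := hsv z a ha a' ha'
    refine ⟨_, ⟨(1 - mu) • ((1 - lam) • z + lam • a) + mu • b,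
      Set.mem_iUnion₂.mpr ⟨_, by rw [hR₁]; exact ⟨a, ha, rfl⟩, ?_⟩, rfl⟩, key a b⟩
    rw [hR₂]; exact ⟨b, hb2, rfl⟩
end

section
/- Let H be a real Hilbert space, let A, B : H ⇉ H be set-valued operators, let γ, δ > 0, let λ = 1 + δ/γ and μ = 1 + γ/δ, and let κ > 0. Suppose the resolvent J₁ := (Id + γA)^{-1} is single-valued. Define J₂ := (Id + δB)^{-1}, R₁ := (1 − λ)Id + λJ₁, R₂ := (1 − μ)Id + μJ₂, and T_aDR := (1 − κ)Id + κR₂R₁. Then J₁(Fix T_aDR) = zer(A + B), where Fix T_aDR := {x : x ∈ T_aDR(x)} and zer(A + B) := {x : 0 ∈ A(x) + B(x)}. -/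
open scoped Pointwise

/-!
Since `κ ≠ 0`, `z` is a fixed point of `T_aDR` iff `z ∈ R₂ (R₁ z)`. The parameters satisfy
`λμ = λ + μ`, so `R₂ R₁` moves `z` by `μ (u - x)` for `x = J₁ z` and `u ∈ J₂ (R₁ z)`: thus `z` is
fixed iff `x ∈ J₂ (R₁ z)`. Writing `z = x + γ a` with `a ∈ A x`, this says
`R₁ z - x = -δ a ∈ δ B x`, i.e. `0 ∈ A x + B x`; conversely every zero `x`, with `a ∈ A x` and
`-a ∈ B x`, arises from `z = x + γ a`.
-/

section

variable {𝕜 E : Type*} [Field 𝕜] [AddCommGroup E] [Module 𝕜 E]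

def setResolvent (γ : 𝕜) (A : E → Set E) (z : E) : Set E := {x | z - x ∈ γ • A x}

lemma one_add_div_mul_one_add_div {γ δ : 𝕜} (hγ : γ ≠ 0) (hδ : δ ≠ 0) :
    (1 + δ / γ) * (1 + γ / δ) = (1 + δ / γ) + (1 + γ / δ) := by
  field_simp
  ring

lemma mem_relax_image_self_iff {κ : 𝕜} (hκ : κ ≠ 0) {S : Set E} {z : E} :
    z ∈ (fun w => (1 - κ) • z + κ • w) '' S ↔ z ∈ S := by
  have key : ∀ w : E, (1 - κ) • z + κ • w = z ↔ w = z := fun w => by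
    rw [← sub_eq_zero, show (1 - κ) • z + κ • w - z = κ • (w - z) by module, smul_eq_zero,
      sub_eq_zero, or_iff_right hκ]
  simp only [Set.mem_image, key, exists_eq_right]

lemma reflect_reflect_eq {lam mu : 𝕜} (hlm : lam * mu = lam + mu) (z x u : E) :
    (1 - mu) • ((1 - lam) • z + lam • x) + mu • u = z + mu • (u - x) := by
  linear_combination (norm := module) hlm • (z - x)

lemma mem_biUnion_reflect_self_iff {lam mu : 𝕜} (hmu : mu ≠ 0) (hlm : lam * mu = lam + mu)
    {S : Set E} {J : E → Set E} {z : E} :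
    z ∈ ⋃ y ∈ (fun x => (1 - lam) • z + lam • x) '' S, (fun u => (1 - mu) • y + mu • u) '' J y ↔
      ∃ x ∈ S, x ∈ J ((1 - lam) • z + lam • x) := by
  rw [Set.biUnion_image]
  simp only [Set.mem_iUnion₂, Set.mem_image, reflect_reflect_eq hlm,
    add_eq_left, smul_eq_zero, hmu, false_or, sub_eq_zero, exists_eq_right, exists_prop]

lemma exists_setResolvent_iff_zero_mem_add {γ δ lam : 𝕜} (hγ : γ ≠ 0) (hδ : δ ≠ 0)
    (hlam : lam = 1 + δ / γ) (A B : E → Set E) (x : E) :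
    (∃ z, x ∈ setResolvent γ A z ∧ x ∈ setResolvent δ B ((1 - lam) • z + lam • x)) ↔
      (0 : E) ∈ A x + B x := by
  have reflect_sub : ∀ a : E, (1 - lam) • (x + γ • a) + lam • x - x = δ • -a := fun a => by
    rw [hlam]
    match_scalars <;> field_simp <;> ring
  constructor
  · rintro ⟨z, hA, hB⟩
    obtain ⟨a, ha, hza⟩ := hA
    obtain rfl : z = x + γ • a := sub_eq_iff_eq_add'.1 hza.symm
    rw [setResolvent, Set.mem_ofPred_eq, reflect_sub, Set.smul_mem_smul_set_iff₀ hδ] at hB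
    exact ⟨a, ha, -a, hB, add_neg_cancel a⟩
  · rintro ⟨a, ha, b, hb, hab⟩
    obtain rfl : b = -a := eq_neg_of_add_eq_zero_right hab
    refine ⟨x + γ • a, ?_, ?_⟩
    · simpa [setResolvent] using Set.smul_mem_smul_set ha
    · simpa only [setResolvent, Set.mem_ofPred_eq, reflect_sub] using Set.smul_mem_smul_set hb

end

theorem aDR_fixedPoints_image_general {H : Type*} [NormedAddCommGroup H] [InnerProductSpace ℝ H]
    (A B : H → Set H) (γ δ lam mu κ : ℝ)
    (hγ : 0 < γ) (hδ : 0 < δ) (hlam : lam = 1 + δ / γ) (hmu : mu = 1 + γ / δ)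
    (hκ : 0 < κ)
    (J₁ : H → Set H) (hJ₁ : ∀ z, J₁ z = {x : H | z - x ∈ γ • A x})
    (J₂ : H → Set H) (hJ₂ : ∀ z, J₂ z = {x : H | z - x ∈ δ • B x})
    (hsv : ∀ z, ∀ x ∈ J₁ z, ∀ x' ∈ J₁ z, x = x')
    (R₁ : H → Set H) (hR₁ : ∀ z, R₁ z = (fun x => (1 - lam) • z + lam • x) '' J₁ z)
    (R₂ : H → Set H) (hR₂ : ∀ z, R₂ z = (fun x => (1 - mu) • z + mu • x) '' J₂ z)
    (T : H → Set H)
    (hT : ∀ z, T z = (fun w => (1 - κ) • z + κ • w) '' (⋃ y ∈ R₁ z, R₂ y)) :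
    {x : H | ∃ z ∈ {w : H | w ∈ T w}, x ∈ J₁ z} =
      {x : H | (0 : H) ∈ A x + B x} := by
  have hlm : lam * mu = lam + mu := by
    rw [hlam, hmu]; exact one_add_div_mul_one_add_div hγ.ne' hδ.ne'
  have hmu0 : mu ≠ 0 := by rw [hmu]; positivity
  have hfix : ∀ z, z ∈ T z ↔ ∃ x ∈ J₁ z, x ∈ J₂ ((1 - lam) • z + lam • x) := fun z => by
    rw [hT, mem_relax_image_self_iff hκ.ne', hR₁]
    simp only [hR₂]
    exact mem_biUnion_reflect_self_iff hmu0 hlm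
  obtain rfl : J₁ = setResolvent γ A := funext hJ₁
  obtain rfl : J₂ = setResolvent δ B := funext hJ₂
  ext x
  rw [Set.mem_ofPred_eq, Set.mem_ofPred_eq,
    ← exists_setResolvent_iff_zero_mem_add hγ.ne' hδ.ne' hlam A B x]
  refine exists_congr fun z => ⟨?_, fun ⟨hx₁, hx₂⟩ => ⟨(hfix z).2 ⟨x, hx₁, hx₂⟩, hx₁⟩⟩
  rintro ⟨hz, hx₁⟩
  obtain ⟨x', hx'₁, hx'₂⟩ := (hfix z).1 hz
  obtain rfl := hsv z x' hx'₁ x hx₁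
  exact ⟨hx₁, hx'₂⟩

/-- Fact: with `λ = 1 + δ/γ`, `μ = 1 + γ/δ` and `J₁` single-valued,
`J₁(Fix T_aDR) = zer(A + B)`. -/
theorem aDR_fixedPoints_image {H : Type*} [NormedAddCommGroup H] [InnerProductSpace ℝ H]
    [CompleteSpace H] (A B : H → Set H) (γ δ lam mu κ : ℝ)
    (hγ : 0 < γ) (hδ : 0 < δ) (hlam : lam = 1 + δ / γ) (hmu : mu = 1 + γ / δ)
    (hκ : 0 < κ)
    (J₁ : H → Set H) (hJ₁ : ∀ z, J₁ z = {x : H | z - x ∈ γ • A x})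
    (J₂ : H → Set H) (hJ₂ : ∀ z, J₂ z = {x : H | z - x ∈ δ • B x})
    (hsv : ∀ z, ∀ x ∈ J₁ z, ∀ x' ∈ J₁ z, x = x')
    (R₁ : H → Set H) (hR₁ : ∀ z, R₁ z = (fun x => (1 - lam) • z + lam • x) '' J₁ z)
    (R₂ : H → Set H) (hR₂ : ∀ z, R₂ z = (fun x => (1 - mu) • z + mu • x) '' J₂ z)
    (T : H → Set H)
    (hT : ∀ z, T z = (fun w => (1 - κ) • z + κ • w) '' (⋃ y ∈ R₁ z, R₂ y)) :
    {x : H | ∃ z ∈ {w : H | w ∈ T w}, x ∈ J₁ z} =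
      {x : H | (0 : H) ∈ A x + B x} :=
  aDR_fixedPoints_image_general A B γ δ lam mu κ hγ hδ hlam hmu hκ J₁ hJ₁ J₂ hJ₂ hsv R₁ hR₁ R₂ hR₂ T
    hT
end
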